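/- arXiv:1504.03718 — 2 statements merged into one kernel-verified Lean document; each statement's English description precedes it below -/
import Mathlib

section
/- Let Ω be a probability space, β* a fixed real number, and for each subset B of {1,...,L} let C(B) : Ω → Set ℝ be a random set. Suppose B* ⊆ {1,...,L} with |B*| < U ≤ L, and suppose for every B with B* ⊆ B we have P(β* ∈ C(B)) ≥ 1 − α. Then the union confidence set C = ⋃_{B : |B| = U−1} C(B) satisfies P(β* ∈ C) ≥ 1 − α. -/
open MeasureTheory
open scoped ENNReal

/-- Theorem 1 of Kang, Cai and Small: if every confidence set `C B` built from a
superset `B ⊇ B*` of the true invalid instruments covers `β*` with probability at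
least `1 - α`, then the union over all subsets of `{1,...,L}` of size `U - 1` covers
`β*` with probability at least `1 - α`. -/
theorem stmt_1 {Ω : Type*} [MeasurableSpace Ω] (P : Measure Ω) [IsProbabilityMeasure P]
    (L U : ℕ) (hUL : U ≤ L) (α : ℝ≥0∞) (hα : α ≤ 1)
    (βstar : ℝ) (C : Finset ℕ → Ω → Set ℝ)
    (Bstar : Finset ℕ) (hBsub : Bstar ⊆ Finset.Icc 1 L) (hBcard : Bstar.card < U)
    (hcover : ∀ B : Finset ℕ, B ⊆ Finset.Icc 1 L → Bstar ⊆ B →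
      1 - α ≤ P {ω | βstar ∈ C B ω}) :
    1 - α ≤ P {ω | ∃ B : Finset ℕ, B ⊆ Finset.Icc 1 L ∧ B.card = U - 1 ∧ βstar ∈ C B ω} := by
  have hcard : Bstar.card ≤ U - 1 := Nat.le_sub_one_of_lt hBcard
  have hIcc : (Finset.Icc 1 L).card = L := by simp
  obtain ⟨B, hBB, hBsub', hBcard'⟩ := Finset.exists_subsuperset_card_eq hBsub hcard
    (by rw [hIcc]; omega)
  calc 1 - α ≤ P {ω | βstar ∈ C B ω} := hcover B hBsub' hBB
    _ ≤ _ := measure_mono (fun ω hω => Set.mem_setOf.mpr ⟨B, hBsub', hBcard', hω⟩)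
end

section
/- Let Ω be a probability space, β* ∈ ℝ, and for each subset B of {1,...,L} let C(B) : Ω → Set ℝ be a random set and S(B) an event (the pretest rejecting). Suppose there exists B̃ with |B̃| = U−1, B* ⊆ B̃, P(β* ∈ C(B̃)) ≥ 1 − α₂, and P(S(B̃)) ≤ α₁. Then the random set C'(ω) = ⋃ {C(B)(ω) : |B| = U−1, ω ∉ S(B)} satisfies P(β* ∈ C') ≥ 1 − α₁ − α₂. -/
/-! Off the rejection event of the pretest for `B̃`, the union `C'` contains `C(B̃)`; so the
coverage of `C'` is at least that of `C(B̃)` minus the probability that the pretest rejects. -/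

open MeasureTheory
open scoped ENNReal

theorem MeasureTheory.sub_le_measure_of_diff_subset {Ω : Type*} [MeasurableSpace Ω]
    {μ : Measure Ω} {A S T : Set Ω} {a b : ℝ≥0∞} (hA : a ≤ μ A) (hS : μ S ≤ b)
    (hT : A \ S ⊆ T) : a - b ≤ μ T :=
  calc a - b ≤ μ A - μ S := tsub_le_tsub hA hS
    _ ≤ μ (A \ S) := le_measure_sdiff
    _ ≤ μ T := measure_mono hT

theorem stmt_3_general {Ω : Type*} [MeasurableSpace Ω] (P : Measure Ω)
    (L U : ℕ) (α₁ α₂ : ℝ≥0∞)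
    (βstar : ℝ) (C : Finset ℕ → Ω → Set ℝ) (S : Finset ℕ → Set Ω)
    (Bstar : Finset ℕ)
    (hex : ∃ Btilde : Finset ℕ, Btilde ⊆ Finset.Icc 1 L ∧ Btilde.card = U - 1 ∧
      Bstar ⊆ Btilde ∧ 1 - α₂ ≤ P {ω | βstar ∈ C Btilde ω} ∧ P (S Btilde) ≤ α₁) :
    1 - α₁ - α₂ ≤
      P {ω | ∃ B : Finset ℕ, B ⊆ Finset.Icc 1 L ∧ B.card = U - 1 ∧ ω ∉ S B ∧ βstar ∈ C B ω} := by
  obtain ⟨B, hBL, hBcard, -, hcover, hpretest⟩ := hex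
  rw [tsub_right_comm]
  exact sub_le_measure_of_diff_subset hcover hpretest fun ω ⟨hβ, hω⟩ => ⟨B, hBL, hBcard, hω, hβ⟩

/-- Theorem 2 of Kang, Cai and Small: the pretested union confidence interval
`C'(ω) = ⋃ {C(B)(ω) : |B| = U - 1, pretest for B does not reject}` has coverage
at least `1 - α₁ - α₂`, provided some `B̃ ⊇ B*` of size `U - 1` has a level
`1 - α₂` confidence interval and a pretest of size at most `α₁`. -/
theorem stmt_3 {Ω : Type*} [MeasurableSpace Ω] (P : Measure Ω) [IsProbabilityMeasure P]
    (L U : ℕ) (hUL : U ≤ L) (α₁ α₂ : ℝ≥0∞) (hα₁ : α₁ ≤ 1) (hα₂ : α₂ ≤ 1)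
    (βstar : ℝ) (C : Finset ℕ → Ω → Set ℝ) (S : Finset ℕ → Set Ω)
    (Bstar : Finset ℕ)
    (hex : ∃ Btilde : Finset ℕ, Btilde ⊆ Finset.Icc 1 L ∧ Btilde.card = U - 1 ∧
      Bstar ⊆ Btilde ∧ 1 - α₂ ≤ P {ω | βstar ∈ C Btilde ω} ∧ P (S Btilde) ≤ α₁) :
    1 - α₁ - α₂ ≤
      P {ω | ∃ B : Finset ℕ, B ⊆ Finset.Icc 1 L ∧ B.card = U - 1 ∧ ω ∉ S B ∧ βstar ∈ C B ω} :=
  stmt_3_general P L U α₁ α₂ βstar C S Bstar hex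
end
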